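/- For all sufficiently small h > 0 the block Ω_h^RR is invertible, and as h → 0⁺ one has (Ω_h^RR)⁻¹ = (1/h)·S⁻¹ − (1/2)(S⁻¹ A_v + A_vᵀ S⁻¹) + O(h). -/

import Mathlib

/-!
Writing `F t = exp (t Ã) S̃ exp (t Ãᵀ) = S̃ + t (Ã S̃ + S̃ Ãᵀ) + O(t²)` and integrating,
`Ω̃_h = h S̃ + (h² / 2) (Ã S̃ + S̃ Ãᵀ) + O(h³)`, whose bottom-right block is
`Ω_h^RR = h (S + h B + O(h²))` with `B = (A_v S + S A_vᵀ) / 2`. Near the unit `S` the inverse has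
the second-order expansion `(S + E)⁻¹ = S⁻¹ - S⁻¹ E S⁻¹ + O(‖E‖²)`, so
`(Ω_h^RR)⁻¹ = h⁻¹ S⁻¹ - S⁻¹ B S⁻¹ + O(h)`, and `S⁻¹ B S⁻¹ = (S⁻¹ A_v + A_vᵀ S⁻¹) / 2`.
-/

open MeasureTheory Matrix

attribute [local instance] Matrix.normedAddCommGroup

/-- The block drift matrix `Ã = [[0, I],[A_x, A_v]]`. -/
noncomputable def Atilde {d : ℕ} (Ax Av : Matrix (Fin d) (Fin d) ℝ) :
    Matrix (Fin d ⊕ Fin d) (Fin d ⊕ Fin d) ℝ :=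
  Matrix.fromBlocks 0 1 Ax Av

/-- The block diffusion matrix `S̃ = [[0,0],[0,S]]`. -/
noncomputable def Stilde {d : ℕ} (S : Matrix (Fin d) (Fin d) ℝ) :
    Matrix (Fin d ⊕ Fin d) (Fin d ⊕ Fin d) ℝ :=
  Matrix.fromBlocks 0 0 0 S

/-- The entrywise integral `Ω̃_h = ∫₀ʰ exp(Ã(h−u)) S̃ exp(Ãᵀ(h−u)) du`. -/
noncomputable def OmegaTilde {d : ℕ} (Ax Av S : Matrix (Fin d) (Fin d) ℝ) (h : ℝ) :
    Matrix (Fin d ⊕ Fin d) (Fin d ⊕ Fin d) ℝ :=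
  Matrix.of fun i j =>
    ∫ u in (0:ℝ)..h,
      (NormedSpace.exp ((h - u) • Atilde Ax Av) * Stilde S *
        NormedSpace.exp ((h - u) • (Atilde Ax Av)ᵀ)) i j

/-- Top-left `d×d` block `Ω_h^SS`. -/
noncomputable def OmegaSS {d : ℕ} (Ax Av S : Matrix (Fin d) (Fin d) ℝ) (h : ℝ) :
    Matrix (Fin d) (Fin d) ℝ := (OmegaTilde Ax Av S h).toBlocks₁₁

/-- Top-right `d×d` block `Ω_h^SR`. -/
noncomputable def OmegaSR {d : ℕ} (Ax Av S : Matrix (Fin d) (Fin d) ℝ) (h : ℝ) :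
    Matrix (Fin d) (Fin d) ℝ := (OmegaTilde Ax Av S h).toBlocks₁₂

/-- Bottom-left `d×d` block `Ω_h^RS`. -/
noncomputable def OmegaRS {d : ℕ} (Ax Av S : Matrix (Fin d) (Fin d) ℝ) (h : ℝ) :
    Matrix (Fin d) (Fin d) ℝ := (OmegaTilde Ax Av S h).toBlocks₂₁

/-- Bottom-right `d×d` block `Ω_h^RR`. -/
noncomputable def OmegaRR {d : ℕ} (Ax Av S : Matrix (Fin d) (Fin d) ℝ) (h : ℝ) :
    Matrix (Fin d) (Fin d) ℝ := (OmegaTilde Ax Av S h).toBlocks₂₂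

open Filter Topology Asymptotics NormedSpace

theorem Units.inv_mul_add_mul_mul_inv {R : Type*} [Ring R] (u : Rˣ) (a b : R) :
    ↑u⁻¹ * (a * u + u * b) * ↑u⁻¹ = ↑u⁻¹ * a + b * ↑u⁻¹ := by
  simp [mul_add, add_mul, mul_assoc]

section BanachAlgebra
variable {𝔸 : Type*} [NormedRing 𝔸] [NormedAlgebra ℝ 𝔸] [CompleteSpace 𝔸]

theorem exp_smul_sub_one_sub_smul_isBigO (a : 𝔸) :
    (fun t : ℝ => exp (t • a) - 1 - t • a) =O[𝓝 0] fun t => t ^ 2 := by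
  have htend : Tendsto (fun t : ℝ => t • a) (𝓝 0) (𝓝 0) := by
    simpa using (tendsto_id (x := 𝓝 (0:ℝ))).smul_const a
  have hexp := ((hasFPowerSeriesAt_exp_zero_of_radius_pos
    (expSeries_radius_pos ℝ 𝔸)).isBigO_sub_partialSum_pow 2).comp_tendsto htend
  refine (hexp.congr_left fun t => ?_).trans <| .of_bound (‖a‖ ^ 2) <| .of_forall fun t => ?_
  · simp [FormalMultilinearSeries.partialSum, Finset.sum_range_succ, expSeries_apply_eq, sub_sub]
  · simp [norm_smul, mul_pow, mul_comm]

theorem exp_smul_sub_one_isBigO (a : 𝔸) :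
    (fun t : ℝ => exp (t • a) - 1) =O[𝓝 0] fun t => t := by
  simpa using (hasDerivAt_exp_smul_const a (0 : ℝ)).isBigO_sub

theorem exp_smul_mul_mul_exp_smul_isBigO (a s b : 𝔸) :
    (fun t : ℝ => exp (t • a) * s * exp (t • b) - s - t • (a * s + s * b)) =O[𝓝 0]
      fun t => t ^ 2 := by
  have hexp_b : Tendsto (fun t : ℝ => exp (t • b)) (𝓝 0) (𝓝 1) := by
    simpa using (hasDerivAt_exp_smul_const b (0 : ℝ)).continuousAt.tendsto
  have h₁ := ((exp_smul_sub_one_sub_smul_isBigO a).mul ((hexp_b.const_mul s).isBigO_one ℝ))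
  have h₂ := (exp_smul_sub_one_sub_smul_isBigO b).const_mul_left s
  have h₃ := (isBigO_refl (fun t : ℝ => t) (𝓝 0)).smul
    ((exp_smul_sub_one_isBigO b).const_mul_left (a * s))
  simp only [mul_one, smul_eq_mul, ← sq] at h₁ h₃
  refine ((h₁.add h₂).add h₃).congr_left fun t => ?_
  simp only [mul_sub, sub_mul, smul_sub, smul_add, mul_one, one_mul, mul_smul_comm, smul_mul_assoc,
    mul_assoc]
  abel

theorem Ring.inverse_sub_first_order_isBigO {α : Type*} {l : Filter α} {t : α → ℝ}
    (ht : Tendsto t l (𝓝 0)) (u : 𝔸ˣ) (b : 𝔸) {f : α → 𝔸}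
    (hf : (fun x => f x - (u + t x • b)) =O[l] fun x => t x ^ 2) :
    (fun x => Ring.inverse (f x) - (↑u⁻¹ - t x • (↑u⁻¹ * b * ↑u⁻¹))) =O[l] fun x => t x ^ 2 := by
  have hsq : (fun x => t x ^ 2) =O[l] t := by
    simpa [sq] using (isBigO_refl t l).mul (ht.isBigO_one ℝ)
  have htb : (fun x => t x • b) =O[l] t :=
    .of_bound ‖b‖ (.of_forall fun x => by rw [norm_smul, mul_comm])
  have he : (fun x => f x - u) =O[l] t :=
    ((hf.trans hsq).add htb).congr_left fun x => by abel
  have h₁ := ((NormedRing.inverse_add_norm_diff_second_order u).comp_tendsto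
    (he.trans_tendsto ht)).trans (he.norm_left.pow 2)
  have h₂ := (ContinuousLinearMap.mulLeftRight ℝ 𝔸 ↑u⁻¹ ↑u⁻¹).isBigO_comp _ l |>.trans hf
  refine (h₁.sub h₂).congr_left fun x => ?_
  simp only [Function.comp_apply, add_sub_cancel, ContinuousLinearMap.mulLeftRight_apply, mul_sub,
    sub_mul, mul_add, add_mul, mul_smul_comm, smul_mul_assoc, Units.inv_mul, one_mul]
  abel
end BanachAlgebra

section IntervalIntegral
variable {E : Type*} [NormedAddCommGroup E] [NormedSpace ℝ E]

theorem intervalIntegral_isBigO_pow_succ {g : ℝ → E} {n : ℕ} (hg : g =O[𝓝 0] fun t => t ^ n) :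
    (fun h => ∫ t in (0 : ℝ)..h, g t) =O[𝓝 0] fun h => h ^ (n + 1) := by
  obtain ⟨C, hC0, hC⟩ := hg.exists_nonneg
  obtain ⟨ε, hε, hball⟩ := Metric.eventually_nhds_iff_ball.1 hC.bound
  refine .of_bound C (eventually_of_mem (Metric.ball_mem_nhds 0 hε) fun h hh => ?_)
  have hle : ∀ t ∈ Set.uIoc 0 h, |t| ≤ |h| := fun t ht => by
    simpa using Set.abs_sub_left_of_mem_uIcc (Set.uIoc_subset_uIcc ht)
  calc ‖∫ t in (0 : ℝ)..h, g t‖ ≤ C * |h| ^ n * |h - 0| :=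
        intervalIntegral.norm_integral_le_of_norm_le_const fun t ht => by
          refine (hball t ?_).trans ?_
          · exact Metric.mem_ball.2 ((Real.dist_0_eq_abs t).trans_le (hle t ht) |>.trans_lt
              (by simpa using hh))
          · simpa using mul_le_mul_of_nonneg_left (pow_le_pow_left₀ (abs_nonneg t) (hle t ht) n) hC0
    _ = C * ‖h ^ (n + 1)‖ := by rw [sub_zero, norm_pow, Real.norm_eq_abs, pow_succ, mul_assoc]

theorem intervalIntegral_comp_sub_isBigO [CompleteSpace E] {F : ℝ → E} (hF : Continuous F)
    (c₀ c₁ : E) (hFc : (fun t => F t - (c₀ + t • c₁)) =O[𝓝 0] fun t => t ^ 2) :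
    (fun h => (∫ u in (0 : ℝ)..h, F (h - u)) - (h • c₀ + (h ^ 2 / 2) • c₁)) =O[𝓝 0]
      fun h => h ^ 3 := by
  refine (intervalIntegral_isBigO_pow_succ hFc).congr_left fun h => ?_
  have hpoly : Continuous fun t : ℝ => c₀ + t • c₁ := by fun_prop
  rw [intervalIntegral.integral_comp_sub_left F h, sub_self, sub_zero,
    intervalIntegral.integral_sub (hF.intervalIntegrable _ _) (hpoly.intervalIntegrable _ _),
    intervalIntegral.integral_add intervalIntegrable_const
      ((by fun_prop : Continuous fun t : ℝ => t • c₁).intervalIntegrable _ _),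
    intervalIntegral.integral_const, intervalIntegral.integral_smul_const, integral_id]
  simp
end IntervalIntegral

/- The entrywise sup norm of the statement is not submultiplicative, so the Banach-algebra lemmas
are used for the `ℓ∞` operator norm, and `Matrix.linftyOp_isBigO_iff` moves `O`-bounds between
the two norms. -/
section LinftyOp
attribute [local instance 2000] Matrix.linftyOpNormedAddCommGroup Matrix.linftyOpNormedRing
  Matrix.linftyOpNormedAlgebra Matrix.linftyOpNormedSpace

theorem Matrix.linftyOp_isBigO_iff {m n α F : Type*} [Fintype m] [Fintype n] [Norm F]
    {l : Filter α} {f : α → Matrix m n ℝ} {g : α → F} :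
    f =O[l] g ↔ (fun x => of.symm (f x)) =O[l] g := by
  let e := (Matrix.ofLinearEquiv (m := m) (n := n) (α := ℝ) ℝ).toContinuousLinearEquiv
  exact ⟨fun h => (e.symm.isBigO_comp f l).trans h, fun h => (e.isBigO_comp _ l).trans h⟩

variable {d : ℕ} (Ax Av S : Matrix (Fin d) (Fin d) ℝ)

theorem omegaTilde_apply_isBigO (i j : Fin d ⊕ Fin d) :
    (fun h => OmegaTilde Ax Av S h i j - (h * Stilde S i j +
      h ^ 2 / 2 * (Atilde Ax Av * Stilde S + Stilde S * (Atilde Ax Av)ᵀ) i j)) =O[𝓝 0]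
      fun h => h ^ 3 := by
  have hexp := Matrix.linftyOp_isBigO_iff.1
    (exp_smul_mul_mul_exp_smul_isBigO (Atilde Ax Av) (Stilde S) (Atilde Ax Av)ᵀ)
  have hentry := isBigO_pi.1 (isBigO_pi.1 hexp i) j
  have hcont : Continuous fun t : ℝ =>
      (exp (t • Atilde Ax Av) * Stilde S * exp (t • (Atilde Ax Av)ᵀ)) i j := by
    fun_prop
  refine intervalIntegral_comp_sub_isBigO hcont _ _ (hentry.congr_left fun t => ?_)
  simp [sub_sub, mul_add]
  -- the two `exp`s are built from the product topology and from the `ℓ∞` operator norm's,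
  -- which agree only after unfolding
  rfl

theorem omegaRR_isBigO :
    (fun h => OmegaRR Ax Av S h - (h • S + (h ^ 2 / 2) • (Av * S + S * Avᵀ))) =O[𝓝 0]
      fun h => h ^ 3 := by
  refine Matrix.linftyOp_isBigO_iff.2 (isBigO_pi.2 fun i => isBigO_pi.2 fun j => ?_)
  refine (omegaTilde_apply_isBigO Ax Av S (.inr i) (.inr j)).congr_left fun h => ?_
  simp [OmegaRR, toBlocks₂₂, Atilde, Stilde, fromBlocks_multiply, fromBlocks_transpose]
  ring

theorem inv_smul_omegaRR_isBigO :
    (fun h => h⁻¹ • OmegaRR Ax Av S h - (S + h • (2⁻¹ : ℝ) • (Av * S + S * Avᵀ))) =O[𝓝[≠] 0]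
      fun h => h ^ 2 := by
  refine ((isBigO_refl (fun h : ℝ => h⁻¹) (𝓝[≠] 0)).smul
    ((omegaRR_isBigO Ax Av S).mono nhdsWithin_le_nhds)).congr'
    (eventually_nhdsWithin_of_forall fun h (hh : h ≠ 0) => ?_)
    (eventually_nhdsWithin_of_forall fun h (hh : h ≠ 0) => by simp [field, pow_succ])
  have hcoef : h⁻¹ * (h ^ 2 / 2) = h * 2⁻¹ := by field_simp
  dsimp only
  rw [smul_sub, smul_add, smul_smul, smul_smul, inv_mul_cancel₀ hh, one_smul, hcoef, smul_smul]

theorem eventually_isUnit_omegaRR (hS : IsUnit S) :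
    ∀ᶠ h in 𝓝[≠] 0, IsUnit (OmegaRR Ax Av S h) := by
  have hsq : Tendsto (fun h : ℝ => h ^ 2) (𝓝[≠] 0) (𝓝 0) :=
    ((continuous_pow 2).tendsto' 0 0 (by simp)).mono_left nhdsWithin_le_nhds
  have hlin : Tendsto (fun h : ℝ => S + h • (2⁻¹ : ℝ) • (Av * S + S * Avᵀ)) (𝓝[≠] 0) (𝓝 S) := by
    simpa using ((tendsto_id.smul_const ((2⁻¹ : ℝ) • (Av * S + S * Avᵀ))).const_add S).mono_left
      (nhdsWithin_le_nhds (a := (0 : ℝ)))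
  have hlim := ((inv_smul_omegaRR_isBigO Ax Av S).trans_tendsto hsq).add hlin
  simp only [sub_add_cancel, zero_add] at hlim
  filter_upwards [self_mem_nhdsWithin, hlim.eventually (Units.isOpen.mem_nhds hS)]
    with h (hh : h ≠ 0) hunit
  exact (isUnit_smul_iff (Units.mk0 h⁻¹ (inv_ne_zero hh)) _).1 hunit

theorem omegaRR_inv_isBigO (hS : IsUnit S) :
    (fun h => (OmegaRR Ax Av S h)⁻¹ - ((1 / h) • S⁻¹ - (1 / 2 : ℝ) • (S⁻¹ * Av + Avᵀ * S⁻¹)))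
      =O[𝓝[≠] 0] fun h => h := by
  obtain ⟨u, rfl⟩ := hS
  have hinv := Ring.inverse_sub_first_order_isBigO (t := fun h => h)
    (tendsto_nhdsWithin_of_tendsto_nhds tendsto_id) u _ (inv_smul_omegaRR_isBigO Ax Av u)
  refine ((isBigO_refl (fun h : ℝ => h⁻¹) (𝓝[≠] 0)).smul hinv).congr' ?_
    (eventually_nhdsWithin_of_forall fun h (hh : h ≠ 0) => by simp [field])
  filter_upwards [self_mem_nhdsWithin, eventually_isUnit_omegaRR Ax Av _ u.isUnit]
    with h (hh : h ≠ 0) hunit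
  have hinv_smul : Ring.inverse (h⁻¹ • OmegaRR Ax Av u h) = h • (OmegaRR Ax Av u h)⁻¹ := by
    rw [← Matrix.nonsing_inv_eq_ringInverse, ← Units.smul_mk0 (inv_ne_zero hh),
      Matrix.inv_smul' _ _ ((Matrix.isUnit_iff_isUnit_det _).1 hunit)]
    simp [Units.smul_def]
  rw [hinv_smul, mul_smul_comm, smul_mul_assoc, Units.inv_mul_add_mul_mul_inv, Matrix.coe_units_inv]
  match_scalars <;> field_simp

end LinftyOp

theorem stmt2_general {d : ℕ} (Ax Av S : Matrix (Fin d) (Fin d) ℝ)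
    (hS : S.PosDef) :
    ∃ C > (0:ℝ), ∃ h₀ > (0:ℝ), ∀ h : ℝ, 0 < h → h < h₀ →
      IsUnit (OmegaRR Ax Av S h) ∧
      ‖(OmegaRR Ax Av S h)⁻¹ -
          ((1 / h) • S⁻¹ - (1 / 2 : ℝ) • (S⁻¹ * Av + Avᵀ * S⁻¹))‖ ≤ C * h := by
  have hO : (fun h => (OmegaRR Ax Av S h)⁻¹ -
      ((1 / h) • S⁻¹ - (1 / 2 : ℝ) • (S⁻¹ * Av + Avᵀ * S⁻¹))) =O[𝓝[>] 0] fun h => h :=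
    (Matrix.linftyOp_isBigO_iff.1 (omegaRR_inv_isBigO Ax Av S hS.isUnit)).mono
      (nhdsGT_le_nhdsNE 0)
  obtain ⟨C, hC, hbound⟩ := hO.exists_pos
  obtain ⟨h₀, hh₀, hsmall⟩ := (nhdsGT_basis (0 : ℝ)).eventually_iff.1
    (hbound.bound.and ((eventually_isUnit_omegaRR Ax Av S hS.isUnit).filter_mono
      (nhdsGT_le_nhdsNE 0)))
  refine ⟨C, hC, h₀, hh₀, fun h h0 hh => ?_⟩
  obtain ⟨hle, hunit⟩ := hsmall ⟨h0, hh⟩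
  exact ⟨hunit, by simpa [abs_of_pos h0] using hle⟩

theorem stmt2 {d : ℕ} (hd : 1 ≤ d) (Ax Av S : Matrix (Fin d) (Fin d) ℝ)
    (hS : S.PosDef) :
    ∃ C > (0:ℝ), ∃ h₀ > (0:ℝ), ∀ h : ℝ, 0 < h → h < h₀ →
      IsUnit (OmegaRR Ax Av S h) ∧
      ‖(OmegaRR Ax Av S h)⁻¹ -
          ((1 / h) • S⁻¹ - (1 / 2 : ℝ) • (S⁻¹ * Av + Avᵀ * S⁻¹))‖ ≤ C * h :=
  stmt2_general Ax Av S hS
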